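/- Let (M, dist) be a metric space and let p = p_1, …, p_m be a curve such that dist(p_i, p_{i+1}) ≥ ℓ for every 1 ≤ i < m. Then every curve q with at most m − 1 vertices satisfies d_dF(p, q) ≥ ℓ/2. -/

import Mathlib

/-- One step of a traversal: each index advances by `0` or `1`,
and at least one of the two indices advances. -/
def FrechetStep (a b : ℕ × ℕ) : Prop :=
  (b.1 = a.1 ∨ b.1 = a.1 + 1) ∧ (b.2 = a.2 ∨ b.2 = a.2 + 1) ∧ a.1 + a.2 < b.1 + b.2

/-- `T` is a traversal of two curves with `m` resp. `k` vertices.  Indices are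
`0`-based: the vertices of the first curve are indexed `0, …, m-1` and those of
the second curve `0, …, k-1`. -/
def IsTraversal (m k : ℕ) (T : List (ℕ × ℕ)) : Prop :=
  T ≠ [] ∧ T.head? = some (0, 0) ∧ T.getLast? = some (m - 1, k - 1) ∧
    T.Chain' FrechetStep

/-- The cost of a traversal `T` of the curves `p` and `q`: the maximum of the
pairwise distances of points paired by `T`. -/
noncomputable def travCost {M : Type*} [MetricSpace M] (p q : ℕ → M)
    (T : List (ℕ × ℕ)) : ℝ :=
  (T.map fun ij => dist (p ij.1) (q ij.2)).foldr max 0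

/-- The discrete Fréchet distance between the curve with the `m` vertices
`p 0, …, p (m-1)` and the curve with the `k` vertices `q 0, …, q (k-1)`:
the minimum cost of a traversal of the two curves. -/
noncomputable def discreteFrechet {M : Type*} [MetricSpace M]
    (m : ℕ) (p : ℕ → M) (k : ℕ) (q : ℕ → M) : ℝ :=
  sInf (travCost p q '' {T | IsTraversal m k T})

/-!
A traversal advances the index into `p` by `m - 1` and the index into `q` by `k - 1 < m - 1`,
so some step advances along `p` only: it pairs consecutive vertices `p i`, `p (i + 1)` with the
same `q j`. By the triangle inequality `ℓ ≤ dist (p i) (p (i + 1))` is then at most twice the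
cost of the traversal.
-/

lemma FrechetStep.eq_horizontal {a b : ℕ × ℕ} (h : FrechetStep a b)
    (hslope : b.2 + a.1 < b.1 + a.2) : b = (a.1 + 1, a.2) := by
  obtain ⟨h₁ | h₁, h₂ | h₂, -⟩ := h <;> ext <;> simp only <;> omega

-- `hslope` is `b.2 - a.2 < b.1 - a.1` with the terms moved to avoid truncated subtraction.
lemma exists_horizontal_step {T : List (ℕ × ℕ)} (hT : T.IsChain FrechetStep)
    {a b : ℕ × ℕ} (ha : T.head? = some a) (hb : T.getLast? = some b)
    (hslope : b.2 + a.1 < b.1 + a.2) :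
    ∃ i j, (i, j) ∈ T ∧ (i + 1, j) ∈ T ∧ i + 1 ≤ b.1 := by
  -- Inducting from the end, the bound `i + 1 ≤ b.1` only needs monotonicity of the last step.
  induction T using List.reverseRecOn generalizing b with
  | nil => simp at ha
  | append_singleton T c ih =>
    obtain rfl : b = c := by simpa using hb.symm
    rcases List.eq_nil_or_concat' T with rfl | ⟨S, a', rfl⟩
    · obtain rfl : b = a := by simpa using ha
      omega
    have hT' : (S ++ [a']).IsChain FrechetStep := (List.isChain_append.1 hT).1
    have hstep : FrechetStep a' b := (List.isChain_append.1 hT).2.2 a' (by simp) b rfl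
    have ha' : (S ++ [a']).head? = some a := by
      rwa [List.head?_append_of_ne_nil _ (by simp)] at ha
    by_cases hslope' : a'.2 + a.1 < a'.1 + a.2
    · obtain ⟨i, j, hij, hij', hi⟩ := ih hT' ha' (by simp) hslope'
      have hmono : a'.1 ≤ b.1 := by rcases hstep.1 with h | h <;> omega
      exact ⟨i, j, List.mem_append_left _ hij, List.mem_append_left _ hij', hi.trans hmono⟩
    · have hb : b = (a'.1 + 1, a'.2) := hstep.eq_horizontal (by omega)
      exact ⟨a'.1, a'.2, by simp, by simp [← hb], by rw [hb]⟩

-- Walk along `p` up to index `m - 1`, then along `q`.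
lemma exists_isTraversal (m k : ℕ) : ∃ T, IsTraversal m k T := by
  refine ⟨(List.range (m - 1 + (k - 1) + 1)).map fun i => (min i (m - 1), i - (m - 1)),
    by simp, ?_, ?_, ?_⟩
  · simp [List.range_succ_eq_map]
  · simp only [List.range_succ, List.map_append, List.getLast?_append, List.map_cons,
      List.map_nil, List.getLast?_singleton, Option.some_or]
    congr 1; ext <;> simp only <;> omega
  · show List.IsChain _ _
    rw [List.isChain_map, List.isChain_range_succ]
    intro i hi
    refine ⟨?_, ?_, ?_⟩ <;> simp only <;> omega

lemma dist_le_travCost {M : Type*} [MetricSpace M] (p q : ℕ → M) {T : List (ℕ × ℕ)}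
    {i j : ℕ} (h : (i, j) ∈ T) : dist (p i) (q j) ≤ travCost p q T :=
  List.le_max_of_le' 0 (List.mem_map_of_mem h) le_rfl

/-- If consecutive vertices of the curve `p` (of complexity
`m`) are at distance at least `ℓ` from each other, then every curve `q` with at
most `m − 1` vertices satisfies `d_dF(p, q) ≥ ℓ/2`. -/
theorem frechet_lower_bound_of_separated {M : Type*} [MetricSpace M]
    (m : ℕ) (ℓ : ℝ) (p : ℕ → M)
    (hp : ∀ i, i + 1 < m → ℓ ≤ dist (p i) (p (i + 1)))
    (k : ℕ) (hk : 1 ≤ k) (hkm : k ≤ m - 1) (q : ℕ → M) :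
    ℓ / 2 ≤ discreteFrechet m p k q := by
  obtain ⟨T₀, hT₀⟩ := exists_isTraversal m k
  refine le_csInf ⟨_, T₀, hT₀, rfl⟩ ?_
  rintro _ ⟨T, ⟨-, hhead, hlast, hchain⟩, rfl⟩
  obtain ⟨i, j, hij, hij', hi⟩ :=
    exists_horizontal_step hchain hhead hlast (by simp only; omega)
  have hsep : ℓ ≤ 2 * travCost p q T := calc
    ℓ ≤ dist (p i) (p (i + 1)) := hp i (by simp only at hi; omega)
    _ ≤ dist (p i) (q j) + dist (p (i + 1)) (q j) := dist_triangle_right _ _ _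
    _ ≤ 2 * travCost p q T := by
      linarith [dist_le_travCost p q hij, dist_le_travCost p q hij']
  linarith
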